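/- arXiv:2408.08715 — 2 statements merged into one kernel-verified Lean document; each statement's English description precedes it below -/
import Mathlib

section
/- Let f(x) be a monic polynomial of degree n with rational coefficients, with complex roots α₁, ..., αₙ. Then the polynomial g(x) = (2x)^n · f((x + x⁻¹)/2) equals the product over j of (x² - 2αⱼx + 1), and every root of f is the real part of some root of unity if and only if g is a product of cyclotomic polynomials. -/
open Polynomial

/-!
Since `2x · ((x + x⁻¹)/2 - α) = x² - 2αx + 1`, the factorisation of `g` is immediate, and `g` is
the image of a monic rational polynomial. The roots of `x² - 2αx + 1` are `z` and `z⁻¹` with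
`α = (z + z⁻¹)/2`, and for `z` on the unit circle `z⁻¹ = z̄`; so the roots of `f` are real parts of
roots of unity exactly when all roots of `g` are roots of unity. A monic rational polynomial whose
roots are roots of unity is a product of cyclotomic polynomials: each root `z` has minimal
polynomial `Φ_(orderOf z)`, which can be divided off.
-/

section JoukowskiTransform

variable {R : Type*} [CommSemiring R]

/-- `(2X)ⁿ p((X + X⁻¹)/2)` written without division; it is the formal expression whenever
`p.natDegree ≤ n`. -/
noncomputable def joukowskiTransform (p : R[X]) (n : ℕ) : R[X] :=
  ∑ k ∈ Finset.range (n + 1), C (p.coeff k) * (X ^ 2 + 1) ^ k * (2 * X) ^ (n - k)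

lemma map_joukowskiTransform {S : Type*} [CommSemiring S] (φ : R →+* S) (p : R[X]) (n : ℕ) :
    (joukowskiTransform p n).map φ = joukowskiTransform (p.map φ) n := by
  simp [joukowskiTransform, Polynomial.map_sum, coeff_map]

end JoukowskiTransform

section Field

variable {K : Type*} [Field K] [NeZero (2 : K)]

lemma two_mul_mul_joukowski_sub {z : K} (hz : z ≠ 0) (a : K) :
    2 * z * ((z + z⁻¹) / 2 - a) = z ^ 2 - 2 * a * z + 1 := by
  field_simp
  ring

lemma eval_joukowskiTransform {p : K[X]} {n : ℕ} (hp : p.natDegree ≤ n) {z : K} (hz : z ≠ 0) :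
    (joukowskiTransform p n).eval z = (2 * z) ^ n * p.eval ((z + z⁻¹) / 2) := by
  rw [eval_eq_sum_range' (Nat.lt_succ_of_le hp), Finset.mul_sum]
  simp only [joukowskiTransform, eval_finsetSum, eval_mul, eval_pow, eval_add, eval_X, eval_C,
    eval_one, eval_ofNat]
  refine Finset.sum_congr rfl fun k hk => ?_
  have hkn : k ≤ n := Nat.lt_succ_iff.mp (Finset.mem_range.mp hk)
  have hsplit : (2 * z) ^ n = (2 * z) ^ (n - k) * (2 * z) ^ k := by
    rw [← pow_add, Nat.sub_add_cancel hkn]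
  have hjoukowski : (z + z⁻¹) / 2 = (z ^ 2 + 1) / (2 * z) := by
    field_simp
  rw [hsplit, hjoukowski, div_pow]
  field_simp

lemma two_mul_pow_card_mul_eval_prod_X_sub_C {ι : Type*} [Fintype ι] (a : ι → K) {z : K}
    (hz : z ≠ 0) :
    (2 * z) ^ Fintype.card ι * (∏ i, (X - C (a i))).eval ((z + z⁻¹) / 2) =
      (∏ i, (X ^ 2 - C (2 * a i) * X + 1)).eval z := by
  rw [eval_prod, eval_prod, ← Finset.card_univ, ← Finset.prod_const, ← Finset.prod_mul_distrib]
  refine Finset.prod_congr rfl fun i _ => ?_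
  simpa using two_mul_mul_joukowski_sub hz (a i)

lemma joukowskiTransform_prod_X_sub_C [Infinite K] {ι : Type*} [Fintype ι] (a : ι → K) :
    joukowskiTransform (∏ i, (X - C (a i))) (Fintype.card ι) =
      ∏ i, (X ^ 2 - C (2 * a i) * X + 1) := by
  have hdeg : (∏ i, (X - C (a i))).natDegree ≤ Fintype.card ι :=
    (natDegree_finsetProd_X_sub_C_eq_card _ _).le
  refine eq_of_infinite_eval_eq _ _ ((Set.finite_singleton 0).infinite_compl.mono fun z hz => ?_)
  rw [Set.mem_ofPred_eq, eval_joukowskiTransform hdeg hz,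
    two_mul_pow_card_mul_eval_prod_X_sub_C a hz]

end Field

section Cyclotomic

lemma isOfFinOrder_of_isRoot_prod_cyclotomic {R : Type*} [CommRing R] [IsDomain R]
    {S : Multiset ℕ} (hS : ∀ m ∈ S, 0 < m) {w : R}
    (hw : (S.map (fun m => cyclotomic m R)).prod.IsRoot w) : IsOfFinOrder w := by
  obtain ⟨m, hmS, hroot⟩ : ∃ m ∈ S, eval w (cyclotomic m R) = 0 := by
    simpa [eval_multiset_prod] using hw
  obtain ⟨q, hq⟩ := cyclotomic.dvd_X_pow_sub_one m R
  have hpow : eval w ((X : R[X]) ^ m - 1) = 0 := by rw [hq, eval_mul, hroot, zero_mul]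
  exact isOfFinOrder_iff_pow_eq_one.mpr ⟨m, hS m hmS, by simpa [sub_eq_zero] using hpow⟩

lemma cyclotomic_orderOf_dvd {h : ℚ[X]} {z : ℂ} (hz : (h.map (algebraMap ℚ ℂ)).IsRoot z)
    (hfin : IsOfFinOrder z) : cyclotomic (orderOf z) ℚ ∣ h := by
  rw [cyclotomic_eq_minpoly_rat (IsPrimitiveRoot.orderOf z) hfin.orderOf_pos]
  exact minpoly.dvd ℚ z (by rwa [aeval_def, ← eval_map])

lemma exists_eq_prod_cyclotomic_of_isOfFinOrder {h : ℚ[X]} (hmonic : h.Monic)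
    (hroots : ∀ z : ℂ, (h.map (algebraMap ℚ ℂ)).IsRoot z → IsOfFinOrder z) :
    ∃ S : Multiset ℕ, (∀ m ∈ S, 0 < m) ∧ h = (S.map (fun m => cyclotomic m ℚ)).prod := by
  induction hd : h.natDegree using Nat.strong_induction_on generalizing h with
  | _ d ih =>
    rcases Nat.eq_zero_or_pos d with rfl | hdpos
    · exact ⟨0, by simp, by simp [hmonic.natDegree_eq_zero.mp hd]⟩
    obtain ⟨z, hz⟩ := Complex.exists_root (f := h.map (algebraMap ℚ ℂ))
      (by rw [degree_map]; exact natDegree_pos_iff_degree_pos.mp (hd ▸ hdpos))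
    have hfin := hroots z hz
    obtain ⟨q, rfl⟩ := cyclotomic_orderOf_dvd hz hfin
    have hcyc_monic := cyclotomic.monic (orderOf z) ℚ
    have hq_monic : q.Monic := hcyc_monic.of_mul_monic_left hmonic
    have hq_deg : q.natDegree < d := by
      have htot := Nat.totient_pos.mpr hfin.orderOf_pos
      rw [← hd, hcyc_monic.natDegree_mul hq_monic, natDegree_cyclotomic]
      omega
    have hq_roots : ∀ w : ℂ, (q.map (algebraMap ℚ ℂ)).IsRoot w → IsOfFinOrder w := fun w hw =>
      hroots w (by simp only [Polynomial.map_mul, IsRoot, eval_mul, hw.eq_zero, mul_zero])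
    obtain ⟨S, hS, rfl⟩ := ih _ hq_deg hq_monic hq_roots rfl
    exact ⟨orderOf z ::ₘ S, Multiset.forall_mem_cons.mpr ⟨hfin.orderOf_pos, hS⟩, by simp⟩

lemma forall_isRoot_map_isOfFinOrder_iff {h : ℚ[X]} (hmonic : h.Monic) :
    (∀ z : ℂ, (h.map (algebraMap ℚ ℂ)).IsRoot z → IsOfFinOrder z) ↔
      ∃ S : Multiset ℕ, (∀ m ∈ S, 0 < m) ∧
        h.map (algebraMap ℚ ℂ) = (S.map (fun m => cyclotomic m ℂ)).prod := by
  constructor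
  · intro hroots
    obtain ⟨S, hS, rfl⟩ := exists_eq_prod_cyclotomic_of_isOfFinOrder hmonic hroots
    exact ⟨S, hS, by simp [Polynomial.map_multiset_prod, Multiset.map_map]⟩
  · rintro ⟨S, hS, heq⟩ z hz
    exact isOfFinOrder_of_isRoot_prod_cyclotomic hS (heq ▸ hz)

end Cyclotomic

lemma exists_isOfFinOrder_eq_re_iff (a : ℂ) :
    (∃ z : ℂ, IsOfFinOrder z ∧ a = (z + starRingEnd ℂ z) / 2) ↔
      ∀ w : ℂ, (X ^ 2 - C (2 * a) * X + 1).IsRoot w → IsOfFinOrder w := by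
  simp only [IsRoot, eval_add, eval_sub, eval_mul, eval_pow, eval_X, eval_C, eval_one]
  constructor
  · rintro ⟨z, hz, rfl⟩ w hw
    have hzconj : z * starRingEnd ℂ z = 1 := by
      rw [← Complex.inv_eq_conj hz.norm_eq_one, mul_inv_cancel₀ hz.isUnit.ne_zero]
    have hfactor : (w - z) * (w - starRingEnd ℂ z) = 0 := by
      linear_combination hw + hzconj
    rcases mul_eq_zero.mp hfactor with hwz | hwz
    · rwa [sub_eq_zero.mp hwz]
    · rw [sub_eq_zero.mp hwz]
      exact (starRingEnd ℂ).toMonoidHom.isOfFinOrder hz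
  · intro hroots
    have hdeg : 0 < (X ^ 2 - C (2 * a) * X + 1 : ℂ[X]).degree := by
      rw [show (X ^ 2 - C (2 * a) * X + 1 : ℂ[X]).degree = 2 by compute_degree!]
      norm_num
    obtain ⟨w, hw⟩ := Complex.exists_root hdeg
    simp only [IsRoot, eval_add, eval_sub, eval_mul, eval_pow, eval_X, eval_C, eval_one] at hw
    have hfin := hroots w hw
    refine ⟨w, hfin, ?_⟩
    rw [← Complex.inv_eq_conj hfin.norm_eq_one]
    field_simp [hfin.isUnit.ne_zero]
    linear_combination -hw

theorem transform_poly_real_parts_roots_of_unity_general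
    (n : ℕ) (f : Polynomial ℚ)
    (α : Fin n → ℂ)
    (hroots : f.map (algebraMap ℚ ℂ) = ∏ j : Fin n, (X - C (α j)))
    (g : Polynomial ℂ)
    (hg : g = ∏ j : Fin n, (X ^ 2 - C (2 * α j) * X + 1)) :
    (∀ z : ℂ, z ≠ 0 →
        (2 * z) ^ n * (f.map (algebraMap ℚ ℂ)).eval ((z + z⁻¹) / 2) = g.eval z) ∧
    ((∀ j : Fin n, ∃ (z : ℂ) (m : ℕ), 0 < m ∧ z ^ m = 1 ∧ α j = (z + (starRingEnd ℂ) z) / 2)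
      ↔ ∃ S : Multiset ℕ, (∀ m ∈ S, 0 < m) ∧
          g = (S.map (fun m => Polynomial.cyclotomic m ℂ)).prod) := by
  have hrational : (joukowskiTransform f n).map (algebraMap ℚ ℂ) = g := by
    rw [map_joukowskiTransform, hroots, hg]
    simpa using joukowskiTransform_prod_X_sub_C α
  have hmonic : (joukowskiTransform f n).Monic := by
    rw [← monic_map_iff (f := algebraMap ℚ ℂ), hrational, hg]
    exact monic_prod_of_monic _ _ fun j _ => by monicity!
  refine ⟨fun z hz => by simpa [hroots, hg] using two_mul_pow_card_mul_eval_prod_X_sub_C α hz, ?_⟩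
  rw [← hrational, ← forall_isRoot_map_isOfFinOrder_iff hmonic, hrational, hg]
  simp only [isRoot_prod, Finset.mem_univ, true_and, forall_exists_index]
  rw [forall_comm]
  refine forall_congr' fun j => ?_
  rw [← exists_isOfFinOrder_eq_re_iff]
  simp only [isOfFinOrder_iff_pow_eq_one, ← exists_and_right, and_assoc]

theorem transform_poly_real_parts_roots_of_unity
    (n : ℕ) (f : Polynomial ℚ) (hf : f.Monic) (hdeg : f.natDegree = n)
    (α : Fin n → ℂ)
    (hroots : f.map (algebraMap ℚ ℂ) = ∏ j : Fin n, (X - C (α j)))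
    (g : Polynomial ℂ)
    (hg : g = ∏ j : Fin n, (X ^ 2 - C (2 * α j) * X + 1)) :
    (∀ z : ℂ, z ≠ 0 →
        (2 * z) ^ n * (f.map (algebraMap ℚ ℂ)).eval ((z + z⁻¹) / 2) = g.eval z) ∧
    ((∀ j : Fin n, ∃ (z : ℂ) (m : ℕ), 0 < m ∧ z ^ m = 1 ∧ α j = (z + (starRingEnd ℂ) z) / 2)
      ↔ ∃ S : Multiset ℕ, (∀ m ∈ S, 0 < m) ∧
          g = (S.map (fun m => Polynomial.cyclotomic m ℂ)).prod) :=
  transform_poly_real_parts_roots_of_unity_general n f α hroots g hg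
end

section
/- The numbers 1/(√2(1+√5)) and -1/(√2(1-√5)) are not real parts of roots of unity. -/
/-!
If `z ^ m = 1`, then `z` and `conj z` are algebraic integers, hence so is `t = 2 * z.re`. Each of
the given numbers `x` is a root of `64 x⁴ - 24 x² + 1`, i.e. `4 t⁴ - 6 t² + 1 = 0` for `t = 2 x`.
This rearranges to `2 * (3 t² - 2 t⁴) = 1`, which would make `1 / 2` an algebraic integer.
-/

open ComplexConjugate

theorem IsIntegral.two_mul_ne_one {K : Type*} [Field K] [CharZero K] {s : K}
    (hs : IsIntegral ℤ s) : 2 * s ≠ 1 := by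
  intro h
  have hs_eq : s = algebraMap ℚ K 2⁻¹ := by
    rw [map_inv₀, map_ofNat]
    exact eq_inv_of_mul_eq_one_left (mul_comm s 2 ▸ h)
  rw [hs_eq, isIntegral_algebraMap_iff (algebraMap ℚ K).injective,
    IsIntegrallyClosed.isIntegral_iff] at hs
  obtain ⟨n, hn⟩ := hs
  have h2n : (2 * n : ℚ) = 1 := by
    rw [show (n : ℚ) = 2⁻¹ from hn]
    norm_num
  have : 2 * n = 1 := by exact_mod_cast h2n
  omega

theorem IsIntegral.quartic_ne_zero {K : Type*} [Field K] [CharZero K] {t : K}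
    (ht : IsIntegral ℤ t) : 4 * t ^ 4 - 6 * t ^ 2 + 1 ≠ 0 := by
  intro h
  have hs : IsIntegral ℤ ((3 : ℕ) * t ^ 2 - (2 : ℕ) * t ^ 4) :=
    ((isIntegral_natCast 3).mul (ht.pow 2)).sub ((isIntegral_natCast 2).mul (ht.pow 4))
  refine hs.two_mul_ne_one ?_
  push_cast
  linear_combination -h

theorem isIntegral_two_mul_re_of_pow_eq_one {z : ℂ} {m : ℕ} (hm : 0 < m) (hz : z ^ m = 1) :
    IsIntegral ℤ ((2 * z.re : ℝ) : ℂ) := by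
  have hz_int : IsIntegral ℤ z := .of_pow hm (hz ▸ isIntegral_one)
  have hconj_int : IsIntegral ℤ (conj z) :=
    .of_pow hm (by rw [← map_pow, hz, map_one]; exact isIntegral_one)
  rw [← Complex.add_conj]
  exact hz_int.add hconj_int

theorem re_quartic_ne_zero_of_pow_eq_one {z : ℂ} {m : ℕ} (hm : 0 < m) (hz : z ^ m = 1) :
    64 * z.re ^ 4 - 24 * z.re ^ 2 + 1 ≠ 0 := by
  intro h
  apply (isIntegral_two_mul_re_of_pow_eq_one hm hz).quartic_ne_zero
  have h' : ((64 * z.re ^ 4 - 24 * z.re ^ 2 + 1 : ℝ) : ℂ) = 0 := by exact_mod_cast h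
  push_cast at h' ⊢
  linear_combination h'

theorem quartic_eq_zero_of_sq_eq_five {a : ℝ} (ha : a ^ 2 = 5) :
    64 * (1 / (Real.sqrt 2 * (1 + a))) ^ 4 - 24 * (1 / (Real.sqrt 2 * (1 + a))) ^ 2 + 1 = 0 := by
  set x := 1 / (Real.sqrt 2 * (1 + a))
  have h1a : 1 + a ≠ 0 := by
    intro h
    nlinarith
  have hx_sq : x ^ 2 = (3 - a) / 16 := by
    rw [div_pow, mul_pow, Real.sq_sqrt zero_le_two]
    field_simp
    linear_combination (2 * a - 2) * ha
  rw [show x ^ 4 = (x ^ 2) ^ 2 by ring, hx_sq]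
  linear_combination ha / 4

theorem not_real_part_root_of_unity_sqrt2_sqrt5 :
    (¬ ∃ (z : ℂ) (m : ℕ), 0 < m ∧ z ^ m = 1 ∧
        z.re = 1 / (Real.sqrt 2 * (1 + Real.sqrt 5))) ∧
    (¬ ∃ (z : ℂ) (m : ℕ), 0 < m ∧ z ^ m = 1 ∧
        z.re = -(1 / (Real.sqrt 2 * (1 - Real.sqrt 5)))) := by
  have hsqrt5 : Real.sqrt 5 ^ 2 = 5 := Real.sq_sqrt (by norm_num)
  constructor
  · rintro ⟨z, m, hm, hz, hre⟩
    exact re_quartic_ne_zero_of_pow_eq_one hm hz (hre ▸ quartic_eq_zero_of_sq_eq_five hsqrt5)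
  · rintro ⟨z, m, hm, hz, hre⟩
    have hquartic := quartic_eq_zero_of_sq_eq_five (a := -Real.sqrt 5) (by rwa [neg_sq])
    rw [← sub_eq_add_neg] at hquartic
    refine re_quartic_ne_zero_of_pow_eq_one hm hz ?_
    rwa [hre, Even.neg_pow (by decide), Even.neg_pow (by decide)]
end
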